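/- arXiv:1612.03710 — 7 statements merged into one kernel-verified Lean document; each statement's English description precedes it below -/
import Mathlib

section
/- If the discrete-time system x(k+1)=g(x(k),u(k)) is ωISS, i.e., there exist β ∈ KL and γ ∈ K such that ω(x(k,ξ,u)) ≤ max{β(ω(ξ),k), γ(‖u‖)} for all ξ, all bounded inputs u and all k ≥ 0, then g is globally K-bounded with respect to ω, i.e., there exist κ₁,κ₂ ∈ K∞ with ω(g(ξ,μ)) ≤ κ₁(ω(ξ)) + κ₂(|μ|) for all ξ ∈ ℝⁿ, μ ∈ ℝᵐ. -/
open Filter Topology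

/-- Class-K function: continuous, strictly increasing on [0,∞), zero at zero. -/
def ClassK (α : ℝ → ℝ) : Prop :=
  ContinuousOn α (Set.Ici 0) ∧ StrictMonoOn α (Set.Ici 0) ∧ α 0 = 0

/-- Class-K∞ function. -/
def ClassKInf (α : ℝ → ℝ) : Prop :=
  ClassK α ∧ Filter.Tendsto α Filter.atTop Filter.atTop

/-- Class-KL function. -/
def ClassKL (β : ℝ → ℝ → ℝ) : Prop :=
  ContinuousOn (fun p : ℝ × ℝ => β p.1 p.2) (Set.Ici 0 ×ˢ Set.Ici 0) ∧
  (∀ s, 0 ≤ s → ClassK (fun r => β r s)) ∧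
  (∀ r, 0 ≤ r → AntitoneOn (fun s => β r s) (Set.Ici 0) ∧
    Filter.Tendsto (fun s => β r s) Filter.atTop (nhds 0))

/-- Measurement function: continuous and positive semidefinite. -/
def MeasurementFn {E : Type*} [TopologicalSpace E] (ω : E → ℝ) : Prop :=
  Continuous ω ∧ ∀ x, 0 ≤ ω x

/-- Sup-norm of an input sequence. -/
noncomputable def supNorm {U : Type*} [Norm U] (u : ℕ → U) : ℝ := ⨆ k, ‖u k‖

/-- A bounded input sequence. -/
def BddInput {U : Type*} [Norm U] (u : ℕ → U) : Prop := ∃ C, ∀ k, ‖u k‖ ≤ C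

/-- Solution of x(k+1) = g(x(k), u(k)) from initial state ξ. -/
def sol {E U : Type*} (g : E → U → E) (ξ : E) (u : ℕ → U) : ℕ → E
  | 0 => ξ
  | k + 1 => g (sol g ξ u k) (u k)

/-- Composition of gains along a path i(0), i(1), ..., i(k):
`γ (i 0) (i 1) ∘ γ (i 1) (i 2) ∘ ⋯ ∘ γ (i (k-1)) (i k)`. -/
def compAlong {ℓ : ℕ} (γ : Fin ℓ → Fin ℓ → ℝ → ℝ) (i : ℕ → Fin ℓ) : ℕ → ℝ → ℝ
  | 0 => id
  | k + 1 => (compAlong γ i k) ∘ γ (i k) (i (k + 1))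

/-- Cyclic small-gain condition: all gain compositions along cycles of
length at most ℓ are strictly below the identity. -/
def SmallGainCond {ℓ : ℕ} (γ : Fin ℓ → Fin ℓ → ℝ → ℝ) : Prop :=
  ∀ r : ℕ, 1 ≤ r → r ≤ ℓ → ∀ i : ℕ → Fin ℓ, i r = i 0 →
    ∀ s : ℝ, 0 < s → compAlong γ i r s < s

/-- A monotonic norm on ℝ^ℓ. -/
def MonotoneNorm {ℓ : ℕ} (μ : (Fin ℓ → ℝ) → ℝ) : Prop :=
  (∀ z, 0 ≤ μ z) ∧ (∀ z, μ z = 0 ↔ z = 0) ∧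
  (∀ (c : ℝ) z, μ (c • z) = |c| * μ z) ∧
  (∀ z w, μ (z + w) ≤ μ z + μ w) ∧
  (∀ z w : Fin ℓ → ℝ, (∀ i, 0 ≤ z i) → (∀ i, z i ≤ w i) → μ z ≤ μ w)

lemma classK_nonneg {α : ℝ → ℝ} (h : ClassK α) {r : ℝ} (hr : 0 ≤ r) : 0 ≤ α r := by
  rcases eq_or_lt_of_le hr with rfl | hr'
  · exact le_of_eq h.2.2.symm
  · have := h.2.1 (Set.self_mem_Ici) (Set.mem_Ici.mpr hr) hr'
    linarith [h.2.2]

lemma classK_add_id_KInf {α : ℝ → ℝ} (h : ClassK α) :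
    ClassKInf (fun r => α r + r) := by
  refine ⟨⟨h.1.add continuousOn_id, ?_, by simp [h.2.2]⟩, ?_⟩
  · intro a ha b hb hab
    exact add_lt_add_of_le_of_lt (h.2.1.monotoneOn ha hb hab.le) hab
  · refine tendsto_atTop_mono' _ ?_ tendsto_id
    filter_upwards [eventually_ge_atTop (0 : ℝ)] with r hr
    have := classK_nonneg h hr
    simp only [id]
    linarith

/-- ωISS implies global K-boundedness of the dynamics map. -/
theorem omegaISS_implies_Kbounded (n m : ℕ)
    (g : EuclideanSpace ℝ (Fin n) → EuclideanSpace ℝ (Fin m) → EuclideanSpace ℝ (Fin n))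
    (hg : Continuous fun p : EuclideanSpace ℝ (Fin n) × EuclideanSpace ℝ (Fin m) => g p.1 p.2)
    (ω : EuclideanSpace ℝ (Fin n) → ℝ) (hω : MeasurementFn ω)
    (β : ℝ → ℝ → ℝ) (γ : ℝ → ℝ) (hβ : ClassKL β) (hγ : ClassK γ)
    (hISS : ∀ ξ u, BddInput u → ∀ k : ℕ,
      ω (sol g ξ u k) ≤ max (β (ω ξ) (k : ℝ)) (γ (supNorm u))) :
    ∃ κ₁ κ₂ : ℝ → ℝ, ClassKInf κ₁ ∧ ClassKInf κ₂ ∧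
      ∀ ξ μ, ω (g ξ μ) ≤ κ₁ (ω ξ) + κ₂ ‖μ‖ := by
  have hβ1 : ClassK (fun r => β r 1) := hβ.2.1 1 zero_le_one
  refine ⟨fun r => β r 1 + r, fun s => γ s + s, classK_add_id_KInf hβ1,
    classK_add_id_KInf hγ, fun ξ μ => ?_⟩
  have hbdd : BddInput (fun _ : ℕ => μ) := ⟨‖μ‖, fun _ => le_rfl⟩
  have hsup : supNorm (fun _ : ℕ => μ) = ‖μ‖ := ciSup_const
  have h1 := hISS ξ (fun _ => μ) hbdd 1
  have hsol : sol g ξ (fun _ : ℕ => μ) 1 = g ξ μ := rfl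
  rw [hsol, hsup, Nat.cast_one] at h1
  have hωξ : 0 ≤ ω ξ := hω.2 ξ
  have hnn : (0:ℝ) ≤ ‖μ‖ := norm_nonneg μ
  have h2 : 0 ≤ β (ω ξ) 1 := classK_nonneg hβ1 hωξ
  have h3 : 0 ≤ γ ‖μ‖ := classK_nonneg hγ hnn
  rcases max_cases (β (ω ξ) 1) (γ ‖μ‖) with ⟨he, _⟩ | ⟨he, _⟩ <;>
    rw [he] at h1 <;> dsimp only <;> linarith
end

section
/- If a discrete-time system admits an implication-form finite-step ωISS Lyapunov function V (i.e., α̲(ω(ξ)) ≤ V(ξ) ≤ ᾱ(ω(ξ)) and V(ξ) ≥ γ_imp(‖u‖) implies V(x(M,ξ,u)) − V(ξ) ≤ −α_imp(V(ξ)) for a positive definite α_imp with id − α_imp ∈ K∞ and γ_imp ∈ K) and g is globally K-bounded with respect to ω, then V is a max-form finite-step ωISS Lyapunov function, i.e., there exist α_max ∈ K∞ with α_max < id and γ_max ∈ K such that V(x(M,ξ,u)) ≤ max{α_max(V(ξ)), γ_max(‖u‖)} for all ξ and bounded inputs u. -/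
open Filter Topology

/-!
Split according to whether the input or the state dominates. If `γimp ‖u‖ ≤ V ξ`, the
implication form gives `V (x(M)) ≤ (id - αimp) (V ξ)` directly. Otherwise
`αl (ω ξ) ≤ V ξ < γimp ‖u‖` bounds `ω ξ` by `αl⁻¹ (γimp ‖u‖)`, and iterating the K-bound `M`
times bounds `ω (x(M))`, hence `V (x(M)) ≤ αu (ω (x(M)))`, by a continuous nondecreasing
function of `‖u‖` vanishing at `0`; adding `‖u‖` to it yields a class-K gain.
-/

open Set

namespace ClassK

theorem nonneg {f : ℝ → ℝ} (hf : ClassK f) {r : ℝ} (hr : 0 ≤ r) : 0 ≤ f r := by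
  simpa [hf.2.2] using hf.2.1.monotoneOn self_mem_Ici hr hr

theorem exists_continuous_monotone_extension {f : ℝ → ℝ} (hf : ClassK f) :
    ∃ f' : ℝ → ℝ, Continuous f' ∧ Monotone f' ∧ EqOn f' f (Ici 0) :=
  ⟨fun s => f (max s 0),
    hf.1.comp_continuous (continuous_id.max continuous_const) fun _ => mem_Ici.2 (le_max_right _ _),
    fun _ _ hab => hf.2.1.monotoneOn (mem_Ici.2 (le_max_right _ _)) (mem_Ici.2 (le_max_right _ _))
      (max_le_max hab le_rfl),
    fun _ hs => by simp only [max_eq_left (mem_Ici.1 hs)]⟩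

end ClassK

theorem ClassKInf.exists_continuous_monotone_leftInverse {α : ℝ → ℝ} (hα : ClassKInf α) :
    ∃ β : ℝ → ℝ, Continuous β ∧ Monotone β ∧ ∀ r, 0 ≤ r → β (α r) = r := by
  obtain ⟨hK, htop⟩ := hα
  let f : Ici (0 : ℝ) → Ici (0 : ℝ) := fun x => ⟨α x, hK.nonneg x.2⟩
  have hf_surj : Function.Surjective f := by
    rintro ⟨y, hy⟩
    obtain ⟨x, hx, rfl⟩ := intermediate_value_Ici hK.1 htop (hK.2.2 ▸ hy)
    exact ⟨⟨x, hx⟩, rfl⟩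
  let φ := StrictMono.orderIsoOfSurjective f (fun a b hab => hK.2.1 a.2 b.2 hab) hf_surj
  refine ⟨fun t => φ.symm (projIci 0 t), ?_, fun a b hab => φ.symm.monotone (monotone_projIci hab),
    fun r hr => ?_⟩
  · exact continuous_subtype_val.comp <|
      φ.symm.toHomeomorph.continuous.comp ((continuous_const.max continuous_id).subtype_mk _)
  · have hφ : projIci 0 (α r) = φ ⟨r, hr⟩ := projIci_of_mem (hK.nonneg hr)
    simp only [hφ, φ.symm_apply_apply]

theorem classK_add_id {f : ℝ → ℝ} (hc : Continuous f) (hm : Monotone f) (h0 : f 0 = 0) :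
    ClassK fun s => f s + s :=
  ⟨(hc.add continuous_id).continuousOn, (hm.add_strictMono strictMono_id).strictMonoOn _,
    by simp [h0]⟩

theorem supNorm_nonneg {U : Type*} [SeminormedAddGroup U] (u : ℕ → U) : 0 ≤ supNorm u :=
  Real.iSup_nonneg fun _ => norm_nonneg _

theorem BddInput.norm_le_supNorm {U : Type*} [Norm U] {u : ℕ → U} (hu : BddInput u) (k : ℕ) :
    ‖u k‖ ≤ supNorm u :=
  le_ciSup (hu.imp fun _ hC => forall_mem_range.2 hC) k

noncomputable def iterBound (κ₁ κ₂ : ℝ → ℝ) : ℕ → ℝ → ℝ → ℝ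
  | 0, r, _ => r
  | k + 1, r, s => κ₁ (iterBound κ₁ κ₂ k r s) + κ₂ s

section iterBound

variable {κ₁ κ₂ : ℝ → ℝ}

theorem iterBound_monotone (h₁ : Monotone κ₁) (h₂ : Monotone κ₂) (k : ℕ) :
    Monotone fun p : ℝ × ℝ => iterBound κ₁ κ₂ k p.1 p.2 := by
  induction k with
  | zero => exact monotone_fst
  | succ k ih => exact (h₁.comp ih).add (h₂.comp monotone_snd)

theorem iterBound_continuous (h₁ : Continuous κ₁) (h₂ : Continuous κ₂) (k : ℕ) :
    Continuous fun p : ℝ × ℝ => iterBound κ₁ κ₂ k p.1 p.2 := by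
  induction k with
  | zero => exact continuous_fst
  | succ k ih => exact (h₁.comp ih).add (h₂.comp continuous_snd)

theorem iterBound_zero (h₁ : κ₁ 0 = 0) (h₂ : κ₂ 0 = 0) (k : ℕ) : iterBound κ₁ κ₂ k 0 0 = 0 := by
  induction k with
  | zero => rfl
  | succ k ih => simp [iterBound, ih, h₁, h₂]

theorem apply_sol_le_iterBound {E U : Type*} [Norm U] {g : E → U → E} {ω : E → ℝ}
    (h₁ : Monotone κ₁) (h₂ : Monotone κ₂) (hkb : ∀ ξ μ, ω (g ξ μ) ≤ κ₁ (ω ξ) + κ₂ ‖μ‖)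
    {u : ℕ → U} {s : ℝ} (hu : ∀ k, ‖u k‖ ≤ s) (ξ : E) (k : ℕ) :
    ω (sol g ξ u k) ≤ iterBound κ₁ κ₂ k (ω ξ) s := by
  induction k with
  | zero => exact le_rfl
  | succ k ih => exact (hkb _ _).trans (add_le_add (h₁ ih) (h₂ (hu k)))

end iterBound

theorem implicationform_to_maxform_general (n m : ℕ)
    (g : EuclideanSpace ℝ (Fin n) → EuclideanSpace ℝ (Fin m) → EuclideanSpace ℝ (Fin n))
    (ω : EuclideanSpace ℝ (Fin n) → ℝ) (hω : MeasurementFn ω)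
    (M : ℕ)
    (V : EuclideanSpace ℝ (Fin n) → ℝ)
    (αl αu : ℝ → ℝ) (hαl : ClassKInf αl) (hαu : ClassKInf αu)
    (hsand : ∀ ξ, αl (ω ξ) ≤ V ξ ∧ V ξ ≤ αu (ω ξ))
    -- α_imp is positive definite and id − α_imp is of class K∞
    (αimp : ℝ → ℝ)
    (hαimppos : ∀ s > 0, 0 < αimp s)
    (hid : ClassKInf (fun s => s - αimp s))
    (γimp : ℝ → ℝ) (hγimp : ClassK γimp)
    (himp : ∀ ξ u, BddInput u → γimp (supNorm u) ≤ V ξ →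
      V (sol g ξ u M) - V ξ ≤ -(αimp (V ξ)))
    -- global K-boundedness
    (κ₁ κ₂ : ℝ → ℝ) (hκ₁ : ClassKInf κ₁) (hκ₂ : ClassKInf κ₂)
    (hkb : ∀ ξ μ, ω (g ξ μ) ≤ κ₁ (ω ξ) + κ₂ ‖μ‖) :
    ∃ αmax γmax : ℝ → ℝ, ClassKInf αmax ∧ (∀ s > 0, αmax s < s) ∧ ClassK γmax ∧
      ∀ ξ u, BddInput u →
        V (sol g ξ u M) ≤ max (αmax (V ξ)) (γmax (supNorm u)) := by
  obtain ⟨q, hq_cont, hq_mono, hq⟩ := hαl.exists_continuous_monotone_leftInverse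
  obtain ⟨k₁, hk₁_cont, hk₁_mono, hk₁⟩ := hκ₁.1.exists_continuous_monotone_extension
  obtain ⟨k₂, hk₂_cont, hk₂_mono, hk₂⟩ := hκ₂.1.exists_continuous_monotone_extension
  obtain ⟨a, ha_cont, ha_mono, ha⟩ := hαu.1.exists_continuous_monotone_extension
  obtain ⟨c, hc_cont, hc_mono, hc⟩ := hγimp.exists_continuous_monotone_extension
  have hkb' : ∀ ξ μ, ω (g ξ μ) ≤ k₁ (ω ξ) + k₂ ‖μ‖ := fun ξ μ => by
    rw [hk₁ (hω.2 ξ), hk₂ (norm_nonneg μ)]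
    exact hkb ξ μ
  let γ : ℝ → ℝ := fun s => a (iterBound k₁ k₂ M (q (c s)) s)
  have hγ0 : γ 0 = 0 := by
    have hq0 : q 0 = 0 := by simpa [hαl.1.2.2] using hq 0 le_rfl
    simp only [γ, hc self_mem_Ici, hγimp.2.2, hq0, ha self_mem_Ici, hαu.1.2.2,
      iterBound_zero ((hk₁ self_mem_Ici).trans hκ₁.1.2.2) ((hk₂ self_mem_Ici).trans hκ₂.1.2.2)]
  have hγ : ClassK fun s => γ s + s := classK_add_id
    (ha_cont.comp <| (iterBound_continuous hk₁_cont hk₂_cont M).comp <|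
      (hq_cont.comp hc_cont).prodMk continuous_id)
    (ha_mono.comp <| (iterBound_monotone hk₁_mono hk₂_mono M).comp fun _ _ h =>
      Prod.mk_le_mk.2 ⟨hq_mono (hc_mono h), h⟩)
    hγ0
  refine ⟨fun s => s - αimp s, fun s => γ s + s, hid, fun s hs => sub_lt_self s (hαimppos s hs),
    hγ, fun ξ u hu => ?_⟩
  set s := supNorm u
  by_cases hdec : γimp s ≤ V ξ
  · exact le_max_of_le_left (by linarith [himp ξ u hu hdec])
  have hωξ : ω ξ ≤ q (c s) := by
    rw [← hq _ (hω.2 ξ), hc (supNorm_nonneg u)]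
    exact hq_mono ((hsand ξ).1.trans (not_le.1 hdec).le)
  have htraj := apply_sol_le_iterBound hk₁_mono hk₂_mono hkb' hu.norm_le_supNorm ξ M
  refine le_max_of_le_right ?_
  calc V (sol g ξ u M) ≤ αu (ω (sol g ξ u M)) := (hsand _).2
    _ = a (ω (sol g ξ u M)) := (ha (hω.2 _)).symm
    _ ≤ γ s := ha_mono <| htraj.trans <|
        iterBound_monotone hk₁_mono hk₂_mono M (Prod.mk_le_mk.2 ⟨hωξ, le_rfl⟩)
    _ ≤ γ s + s := le_add_of_nonneg_right (supNorm_nonneg u)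

/-- implication-form finite-step ωISS Lyapunov function plus global
K-boundedness yields a max-form finite-step ωISS Lyapunov function. -/
theorem implicationform_to_maxform (n m : ℕ)
    (g : EuclideanSpace ℝ (Fin n) → EuclideanSpace ℝ (Fin m) → EuclideanSpace ℝ (Fin n))
    (hg : Continuous fun p : EuclideanSpace ℝ (Fin n) × EuclideanSpace ℝ (Fin m) => g p.1 p.2)
    (ω : EuclideanSpace ℝ (Fin n) → ℝ) (hω : MeasurementFn ω)
    (M : ℕ) (hM : 0 < M)
    (V : EuclideanSpace ℝ (Fin n) → ℝ) (hVcont : Continuous V)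
    (αl αu : ℝ → ℝ) (hαl : ClassKInf αl) (hαu : ClassKInf αu)
    (hsand : ∀ ξ, αl (ω ξ) ≤ V ξ ∧ V ξ ≤ αu (ω ξ))
    -- α_imp is positive definite and id − α_imp is of class K∞
    (αimp : ℝ → ℝ) (hαimpC : ContinuousOn αimp (Set.Ici 0)) (hαimp0 : αimp 0 = 0)
    (hαimppos : ∀ s > 0, 0 < αimp s)
    (hid : ClassKInf (fun s => s - αimp s))
    (γimp : ℝ → ℝ) (hγimp : ClassK γimp)
    (himp : ∀ ξ u, BddInput u → γimp (supNorm u) ≤ V ξ →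
      V (sol g ξ u M) - V ξ ≤ -(αimp (V ξ)))
    -- global K-boundedness
    (κ₁ κ₂ : ℝ → ℝ) (hκ₁ : ClassKInf κ₁) (hκ₂ : ClassKInf κ₂)
    (hkb : ∀ ξ μ, ω (g ξ μ) ≤ κ₁ (ω ξ) + κ₂ ‖μ‖) :
    ∃ αmax γmax : ℝ → ℝ, ClassKInf αmax ∧ (∀ s > 0, αmax s < s) ∧ ClassK γmax ∧
      ∀ ξ u, BddInput u →
        V (sol g ξ u M) ≤ max (αmax (V ξ)) (γmax (supNorm u)) :=
  implicationform_to_maxform_general n m g ω hω M V αl αu hαl hαu hsand αimp hαimppos hid γimp hγimp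
    himp κ₁ κ₂ hκ₁ hκ₂ hkb
end

section
/- If the cyclic small-gain condition γ_{i₁i₂}∘γ_{i₂i₃}∘⋯∘γ_{i_{r−1}i_r}∘γ_{i_r i₁} < id holds for all sequences (i₁,…,i_r) ∈ {1,…,ℓ}^r and r = 1,…,ℓ, where each γ_ij ∈ K∞ ∪ {0}, then there exist class-K∞ functions σ₁,…,σ_ℓ such that max_{j∈{1,…,ℓ}} σ_i^{-1}∘γ_ij∘σ_j < id for each i = 1,…,ℓ. -/
open Filter Topology

namespace SG6

open Set

/-! ### Basic facts about class-K∞-or-zero functions -/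

def K0 (f : ℝ → ℝ) : Prop := ClassKInf f ∨ f = 0

lemma _root_.ClassKInf.lt' {f : ℝ → ℝ} (hf : ClassKInf f) {a b : ℝ} (ha : 0 ≤ a) (hab : a < b) :
    f a < f b :=
  hf.1.2.1 (mem_Ici.2 ha) (mem_Ici.2 (ha.trans hab.le)) hab

lemma _root_.ClassKInf.zero' {f : ℝ → ℝ} (hf : ClassKInf f) : f 0 = 0 := hf.1.2.2

lemma _root_.ClassKInf.pos' {f : ℝ → ℝ} (hf : ClassKInf f) {s : ℝ} (hs : 0 < s) : 0 < f s := by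
  rw [← hf.zero']; exact hf.lt' le_rfl hs

lemma K0.zero {f : ℝ → ℝ} (h : K0 f) : f 0 = 0 := by
  rcases h with h | h
  · exact h.zero'
  · simp [h]

lemma K0.mono {f : ℝ → ℝ} (h : K0 f) {a b : ℝ} (ha : 0 ≤ a) (hab : a ≤ b) : f a ≤ f b := by
  rcases h with h | h
  · exact h.1.2.1.monotoneOn (mem_Ici.2 ha) (mem_Ici.2 (ha.trans hab)) hab
  · simp [h]

lemma K0.nonneg {f : ℝ → ℝ} (h : K0 f) {s : ℝ} (hs : 0 ≤ s) : 0 ≤ f s := by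
  rw [← h.zero]; exact h.mono le_rfl hs

lemma contOn_max {f g : ℝ → ℝ} {S : Set ℝ} (hf : ContinuousOn f S) (hg : ContinuousOn g S) :
    ContinuousOn (fun x => max (f x) (g x)) S :=
  fun x hx => (hf x hx).max (hg x hx)

lemma contOn_min {f g : ℝ → ℝ} {S : Set ℝ} (hf : ContinuousOn f S) (hg : ContinuousOn g S) :
    ContinuousOn (fun x => min (f x) (g x)) S :=
  fun x hx => (hf x hx).min (hg x hx)

lemma K0.contOn {f : ℝ → ℝ} (h : K0 f) : ContinuousOn f (Ici 0) := by
  rcases h with h | h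
  · exact h.1.1
  · simp [h]; exact continuousOn_const

lemma K0.comp {f g : ℝ → ℝ} (hf : K0 f) (hg : K0 g) : K0 (fun s => f (g s)) := by
  rcases hg with hg | hg
  · rcases hf with hf | hf
    · left
      refine ⟨⟨hf.1.1.comp hg.1.1 (fun x hx => mem_Ici.2 (K0.nonneg (Or.inl hg) hx)), ?_, ?_⟩, ?_⟩
      · exact hf.1.2.1.comp hg.1.2.1 (fun x hx => mem_Ici.2 (K0.nonneg (Or.inl hg) hx))
      · show f (g 0) = 0
        rw [hg.zero', hf.zero']
      · exact hf.2.comp hg.2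
    · right; funext s; simp [hf]
  · right; funext s; simp [hg, (K0.zero (hf))]

lemma K0.max {f g : ℝ → ℝ} (hf : K0 f) (hg : K0 g) : K0 (fun s => max (f s) (g s)) := by
  rcases hf with hf | hf
  · rcases hg with hg | hg
    · left
      refine ⟨⟨contOn_max hf.1.1 hg.1.1, ?_, ?_⟩, ?_⟩
      · intro a ha b hb hab
        exact max_lt_max (hf.1.2.1 ha hb hab) (hg.1.2.1 ha hb hab)
      · show Max.max (f 0) (g 0) = 0
        rw [hf.zero', hg.zero', max_self]
      · exact tendsto_atTop_mono (fun s => le_max_left _ _) hf.2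
    · left
      refine ⟨⟨contOn_max hf.1.1 (by rw [hg]; exact continuousOn_const), ?_, ?_⟩, ?_⟩
      · intro a ha b hb hab
        show Max.max (f a) (g a) < Max.max (f b) (g b)
        simp only [hg, Pi.zero_apply]
        rw [max_eq_left (K0.nonneg (Or.inl hf) (mem_Ici.1 ha)), max_eq_left (K0.nonneg (Or.inl hf) (mem_Ici.1 hb))]
        exact hf.1.2.1 ha hb hab
      · show Max.max (f 0) (g 0) = 0
        simp [hg, hf.zero']
      · exact tendsto_atTop_mono (fun s => le_max_left _ _) hf.2
  · rcases hg with hg | hg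
    · left
      refine ⟨⟨contOn_max (by rw [hf]; exact continuousOn_const) hg.1.1, ?_, ?_⟩, ?_⟩
      · intro a ha b hb hab
        show Max.max (f a) (g a) < Max.max (f b) (g b)
        simp only [hf, Pi.zero_apply]
        rw [max_eq_right (K0.nonneg (Or.inl hg) (mem_Ici.1 ha)), max_eq_right (K0.nonneg (Or.inl hg) (mem_Ici.1 hb))]
        exact hg.1.2.1 ha hb hab
      · show Max.max (f 0) (g 0) = 0
        simp [hf, hg.zero']
      · exact tendsto_atTop_mono (fun s => le_max_right _ _) hg.2
    · right; funext s; simp [hf, hg]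

/-! ### Inverses of class-K∞ functions -/

noncomputable def kext (f : ℝ → ℝ) : ℝ → ℝ := fun s => if s < 0 then s else f s

lemma kext_eq {f : ℝ → ℝ} {s : ℝ} (hs : 0 ≤ s) : kext f s = f s := by
  simp [kext, not_lt.2 hs]

lemma kext_strictMono {f : ℝ → ℝ} (hf : ClassKInf f) : StrictMono (kext f) := by
  intro a b hab
  rcases lt_or_ge b 0 with hb | hb
  · simp only [kext, if_pos (hab.trans hb), if_pos hb]; exact hab
  · rcases lt_or_ge a 0 with ha | ha
    · simp only [kext, if_pos ha, if_neg (not_lt.2 hb)]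
      calc a < 0 := ha
        _ ≤ f b := by rw [← hf.zero']; exact K0.mono (Or.inl hf) le_rfl hb
    · simp only [kext, if_neg (not_lt.2 ha), if_neg (not_lt.2 (ha.trans hab.le))]
      exact hf.lt' ha hab

lemma kext_continuous {f : ℝ → ℝ} (hf : ClassKInf f) : Continuous (kext f) := by
  rw [continuous_iff_continuousAt]
  intro x
  rcases lt_trichotomy x 0 with hx | hx | hx
  · have : (fun s => s : ℝ → ℝ) =ᶠ[nhds x] kext f := by
      filter_upwards [Iio_mem_nhds hx] with y hy
      simp [kext, if_pos (mem_Iio.1 hy)]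
    exact (continuousAt_id).congr this
  · subst hx
    have h1 : ContinuousWithinAt (kext f) (Iic 0) 0 := by
      apply ContinuousWithinAt.congr (f := fun s : ℝ => s) continuousWithinAt_id
      · intro y hy
        rcases lt_or_eq_of_le (mem_Iic.1 hy) with h | h
        · simp [kext, if_pos h]
        · subst h; simp [kext, hf.zero']
      · simp [kext, hf.zero']
    have h2 : ContinuousWithinAt (kext f) (Ici 0) 0 := by
      apply ContinuousWithinAt.congr (f := f) (hf.1.1 0 (mem_Ici.2 le_rfl))
      · intro y hy; exact kext_eq (mem_Ici.1 hy)
      · exact kext_eq le_rfl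
    have := h1.union h2
    rwa [Iic_union_Ici, continuousWithinAt_univ] at this
  · have : f =ᶠ[nhds x] kext f := by
      filter_upwards [Ioi_mem_nhds hx] with y hy
      exact (kext_eq (le_of_lt (mem_Ioi.1 hy))).symm
    exact (hf.1.1.continuousAt (Ici_mem_nhds hx)).congr this

lemma kext_tendsto_atTop {f : ℝ → ℝ} (hf : ClassKInf f) : Tendsto (kext f) atTop atTop := by
  apply hf.2.congr'
  filter_upwards [eventually_ge_atTop (0:ℝ)] with s hs
  exact (kext_eq hs).symm

lemma kext_tendsto_atBot {f : ℝ → ℝ} (hf : ClassKInf f) : Tendsto (kext f) atBot atBot := by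
  apply tendsto_id.congr'
  filter_upwards [eventually_lt_atBot (0:ℝ)] with s hs
  simp [kext, if_pos hs]

lemma kext_surj {f : ℝ → ℝ} (hf : ClassKInf f) : Function.Surjective (kext f) :=
  Continuous.surjective (kext_continuous hf) (kext_tendsto_atTop hf) (kext_tendsto_atBot hf)

noncomputable def kIso {f : ℝ → ℝ} (hf : ClassKInf f) : ℝ ≃o ℝ :=
  StrictMono.orderIsoOfSurjective (kext f) (kext_strictMono hf) (kext_surj hf)

noncomputable def kinv {f : ℝ → ℝ} (hf : ClassKInf f) : ℝ → ℝ := fun t => (kIso hf).symm t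

lemma kIso_apply {f : ℝ → ℝ} (hf : ClassKInf f) (s : ℝ) : kIso hf s = kext f s := rfl

lemma kinv_kext {f : ℝ → ℝ} (hf : ClassKInf f) (s : ℝ) : kinv hf (kext f s) = s := by
  have := (kIso hf).symm_apply_apply s
  rwa [kIso_apply] at this

lemma kext_kinv {f : ℝ → ℝ} (hf : ClassKInf f) (t : ℝ) : kext f (kinv hf t) = t := by
  have := (kIso hf).apply_symm_apply t
  rwa [kIso_apply] at this

lemma kinv_strictMono {f : ℝ → ℝ} (hf : ClassKInf f) : StrictMono (kinv hf) :=
  (kIso hf).symm.strictMono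

lemma kinv_continuous {f : ℝ → ℝ} (hf : ClassKInf f) : Continuous (kinv hf) :=
  (kIso hf).symm.continuous

lemma kinv_zero {f : ℝ → ℝ} (hf : ClassKInf f) : kinv hf 0 = 0 := by
  have h : kext f 0 = 0 := by rw [kext_eq le_rfl, hf.zero']
  have h2 := kinv_kext hf 0
  rwa [h] at h2

lemma kinv_nonneg {f : ℝ → ℝ} (hf : ClassKInf f) {t : ℝ} (ht : 0 ≤ t) : 0 ≤ kinv hf t := by
  rw [← kinv_zero hf]
  exact (kinv_strictMono hf).monotone ht

lemma kinv_comp_self {f : ℝ → ℝ} (hf : ClassKInf f) {s : ℝ} (hs : 0 ≤ s) :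
    kinv hf (f s) = s := by
  rw [show f s = kext f s from (kext_eq hs).symm, kinv_kext]

lemma self_comp_kinv {f : ℝ → ℝ} (hf : ClassKInf f) {t : ℝ} (ht : 0 ≤ t) :
    f (kinv hf t) = t := by
  have := kext_kinv hf t
  rwa [kext_eq (kinv_nonneg hf ht)] at this

lemma kinv_tendsto {f : ℝ → ℝ} (hf : ClassKInf f) : Tendsto (kinv hf) atTop atTop := by
  rw [tendsto_atTop]
  intro b
  filter_upwards [eventually_ge_atTop (kext f b)] with t ht
  have := (kinv_strictMono hf).monotone ht
  rwa [kinv_kext] at this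

/-! ### Finite max and min -/

def finMax : ∀ {n : ℕ}, (Fin n → ℝ) → ℝ
  | 0, _ => 0
  | _ + 1, f => max (finMax fun i => f i.castSucc) (f (Fin.last _))

lemma finMax_nonneg : ∀ {n : ℕ} (f : Fin n → ℝ), 0 ≤ finMax f := by
  intro n
  induction n with
  | zero => intro f; simp [finMax]
  | succ n IH => intro f; exact le_max_of_le_left (IH _)

lemma le_finMax : ∀ {n : ℕ} (f : Fin n → ℝ) (i : Fin n), f i ≤ finMax f := by
  intro n
  induction n with
  | zero => intro f i; exact i.elim0
  | succ n IH =>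
    intro f i
    induction i using Fin.lastCases with
    | last => exact le_max_right _ _
    | cast i => exact le_max_of_le_left (IH (fun i' => f i'.castSucc) i)

lemma finMax_cases : ∀ {n : ℕ} (f : Fin n → ℝ), finMax f = 0 ∨ ∃ i, finMax f = f i := by
  intro n
  induction n with
  | zero => intro f; left; rfl
  | succ n IH =>
    intro f
    rcases max_choice (finMax fun i => f i.castSucc) (f (Fin.last n)) with h | h
    · rcases IH (fun i => f i.castSucc) with h0 | ⟨i, hi⟩
      · left; rw [show finMax f = _ from h, h0]
      · right; exact ⟨i.castSucc, by rw [show finMax f = _ from h, hi]⟩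
    · right; exact ⟨Fin.last n, h⟩

lemma finMax_mono_pt : ∀ {n : ℕ} (f g : Fin n → ℝ), (∀ i, f i ≤ g i) → finMax f ≤ finMax g := by
  intro n
  induction n with
  | zero => intro f g _; exact le_rfl
  | succ n IH => intro f g h; exact max_le_max (IH _ _ fun i => h i.castSucc) (h _)

lemma finMax_continuousOn {n : ℕ} {S : Set ℝ} (F : Fin n → ℝ → ℝ)
    (h : ∀ i, ContinuousOn (F i) S) :
    ContinuousOn (fun x => finMax fun i => F i x) S := by
  induction n with
  | zero => exact continuousOn_const
  | succ n IH =>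
    show ContinuousOn (fun x => max (finMax fun i : Fin n => F i.castSucc x) (F (Fin.last n) x)) S
    exact contOn_max (IH _ fun i => h i.castSucc) (h _)

def finMin : ∀ {n : ℕ}, (Fin n → ℝ) → ℝ → ℝ
  | 0, _, b => b
  | _ + 1, f, b => min (finMin (fun i => f i.castSucc) b) (f (Fin.last _))

lemma finMin_le_base : ∀ {n : ℕ} (f : Fin n → ℝ) (b : ℝ), finMin f b ≤ b := by
  intro n
  induction n with
  | zero => intro f b; exact le_rfl
  | succ n IH => intro f b; exact min_le_of_left_le (IH _ _)

lemma finMin_le : ∀ {n : ℕ} (f : Fin n → ℝ) (b : ℝ) (i : Fin n), finMin f b ≤ f i := by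
  intro n
  induction n with
  | zero => intro f b i; exact i.elim0
  | succ n IH =>
    intro f b i
    induction i using Fin.lastCases with
    | last => exact min_le_right _ _
    | cast i => exact min_le_of_left_le (IH _ _ i)

lemma finMin_cases : ∀ {n : ℕ} (f : Fin n → ℝ) (b : ℝ),
    finMin f b = b ∨ ∃ i, finMin f b = f i := by
  intro n
  induction n with
  | zero => intro f b; left; rfl
  | succ n IH =>
    intro f b
    rcases min_choice (finMin (fun i => f i.castSucc) b) (f (Fin.last n)) with h | h
    · rcases IH (fun i => f i.castSucc) b with h0 | ⟨i, hi⟩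
      · left; rw [show finMin f b = _ from h, h0]
      · right; exact ⟨i.castSucc, by rw [show finMin f b = _ from h, hi]⟩
    · right; exact ⟨Fin.last n, h⟩

lemma finMin_lt : ∀ {n : ℕ} (f g : Fin n → ℝ) (b c : ℝ), b < c → (∀ i, f i < g i) →
    finMin f b < finMin g c := by
  intro n
  induction n with
  | zero => intro f g b c hbc _; exact hbc
  | succ n IH =>
    intro f g b c hbc h
    apply lt_min
    · exact (min_le_left _ _).trans_lt (IH _ _ _ _ hbc fun i => h i.castSucc)
    · exact (min_le_right _ _).trans_lt (h _)

lemma finMin_continuousOn {n : ℕ} {S : Set ℝ} (F : Fin n → ℝ → ℝ) (B : ℝ → ℝ)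
    (hB : ContinuousOn B S) (h : ∀ i, ContinuousOn (F i) S) :
    ContinuousOn (fun x => finMin (fun i => F i x) (B x)) S := by
  induction n with
  | zero => exact hB
  | succ n IH =>
    show ContinuousOn (fun x => min (finMin (fun i : Fin n => F i.castSucc x) (B x)) (F (Fin.last n) x)) S
    exact contOn_min (IH _ fun i => h i.castSucc) (h _)

lemma tendsto_min_atTop {α : Type*} {l : Filter α} {f g : α → ℝ}
    (hf : Tendsto f l atTop) (hg : Tendsto g l atTop) :
    Tendsto (fun x => min (f x) (g x)) l atTop := by
  rw [tendsto_atTop] at *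
  intro b
  filter_upwards [hf b, hg b] with x h1 h2
  exact le_min h1 h2

lemma finMin_tendsto {n : ℕ} (F : Fin n → ℝ → ℝ) (B : ℝ → ℝ)
    (hB : Tendsto B atTop atTop) (h : ∀ i, Tendsto (F i) atTop atTop) :
    Tendsto (fun x => finMin (fun i => F i x) (B x)) atTop atTop := by
  induction n with
  | zero => exact hB
  | succ n IH =>
    show Tendsto (fun x => min (finMin (fun i : Fin n => F i.castSucc x) (B x)) (F (Fin.last n) x)) atTop atTop
    exact tendsto_min_atTop (IH _ fun i => h i.castSucc) (h _)

/-! ### compAlong lemmas -/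

section CompAlong

variable {n : ℕ} {γ : Fin n → Fin n → ℝ → ℝ}

lemma compAlong_succ (i : ℕ → Fin n) (r : ℕ) (s : ℝ) :
    compAlong γ i (r + 1) s = compAlong γ i r (γ (i r) (i (r + 1)) s) := rfl

lemma compAlong_zero_pt (hγ : ∀ i j, K0 (γ i j)) (i : ℕ → Fin n) :
    ∀ r, compAlong γ i r 0 = 0 := by
  intro r
  induction r with
  | zero => rfl
  | succ r IH => rw [compAlong_succ, (hγ _ _).zero, IH]

lemma compAlong_nonneg (hγ : ∀ i j, K0 (γ i j)) (i : ℕ → Fin n) (r : ℕ) {s : ℝ} (hs : 0 ≤ s) :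
    0 ≤ compAlong γ i r s := by
  induction r generalizing s with
  | zero => exact hs
  | succ r IH => rw [compAlong_succ]; exact IH ((hγ _ _).nonneg hs)

lemma compAlong_mono (hγ : ∀ i j, K0 (γ i j)) (i : ℕ → Fin n) (r : ℕ) {a b : ℝ}
    (ha : 0 ≤ a) (hab : a ≤ b) : compAlong γ i r a ≤ compAlong γ i r b := by
  induction r generalizing a b with
  | zero => exact hab
  | succ r IH =>
    rw [compAlong_succ, compAlong_succ]
    exact IH ((hγ _ _).nonneg ha) ((hγ _ _).mono ha hab)

lemma compAlong_congr {i j : ℕ → Fin n} (r : ℕ) (h : ∀ k, k ≤ r → i k = j k) :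
    compAlong γ i r = compAlong γ j r := by
  induction r with
  | zero => rfl
  | succ r IH =>
    show (compAlong γ i r) ∘ γ (i r) (i (r + 1)) = (compAlong γ j r) ∘ γ (j r) (j (r + 1))
    rw [IH fun k hk => h k (hk.trans (Nat.le_succ r)), h r (Nat.le_succ r), h (r + 1) le_rfl]

lemma compAlong_add (i : ℕ → Fin n) (a : ℕ) :
    ∀ (b : ℕ) (s : ℝ), compAlong γ i (a + b) s = compAlong γ i a (compAlong γ (fun k => i (a + k)) b s) := by
  intro b
  induction b with
  | zero => intro s; rfl
  | succ b IH =>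
    intro s
    show compAlong γ i (a + b) (γ (i (a + b)) (i (a + b + 1)) s) = _
    rw [IH]
    rfl

end CompAlong

/-! ### Extended small gain condition -/

lemma sg_ext {n : ℕ} {γ : Fin n → Fin n → ℝ → ℝ} (hγ : ∀ i j, K0 (γ i j))
    (hSG : SmallGainCond γ) :
    ∀ r, 1 ≤ r → ∀ i : ℕ → Fin n, i r = i 0 → ∀ s : ℝ, 0 < s → compAlong γ i r s < s := by
  intro r
  induction r using Nat.strong_induction_on with
  | _ r IH =>
    intro hr1 i hcyc s hs
    by_cases hrl : r ≤ n
    · exact hSG r hr1 hrl i hcyc s hs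
    push_neg at hrl
    have main : ∀ p q : ℕ, p < q → q ≤ n → i p = i q → compAlong γ i r s < s := by
      intro p q hpq hqn hipq
      set d := q - p with hd
      have hd1 : 1 ≤ d := by omega
      have hpd : p + d = q := by omega
      set r' := r - d with hr'
      have hr'1 : 1 ≤ r' := by omega
      have hr'r : r' < r := by omega
      have hpr' : p < r' := by omega
      set i₂ : ℕ → Fin n := fun k => if k ≤ p then i k else i (k + d) with hi₂
      have hcyc2 : i₂ r' = i₂ 0 := by
        simp only [hi₂]
        rw [if_neg (by omega), if_pos (Nat.zero_le p)]
        have h1 : r' + d = r := by omega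
        rw [h1, hcyc]
      set u := compAlong γ (fun k => i (q + k)) (r - q) s with hu
      have hu0 : 0 ≤ u := compAlong_nonneg hγ _ _ hs.le
      have hsplit : compAlong γ i r s =
          compAlong γ i p (compAlong γ (fun k => i (p + k)) d u) := by
        have h1 : p + (r - p) = r := by omega
        have h2 : d + (r - q) = r - p := by omega
        have h3 : (fun k => i (p + (d + k))) = (fun k => i (q + k)) := by
          funext k; congr 1; omega
        calc compAlong γ i r s = compAlong γ i (p + (r - p)) s := by rw [h1]
          _ = compAlong γ i p (compAlong γ (fun k => i (p + k)) (r - p) s) := compAlong_add i p _ s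
          _ = compAlong γ i p (compAlong γ (fun k => i (p + k)) (d + (r - q)) s) := by rw [h2]
          _ = compAlong γ i p (compAlong γ (fun k => i (p + k)) d
                (compAlong γ (fun k' => i (p + (d + k'))) (r - q) s)) := by
              rw [compAlong_add (fun k => i (p + k)) d (r - q) s]
          _ = _ := by rw [h3]
      have hAu : compAlong γ i₂ r' s = compAlong γ i p u := by
        have e0 : p + (r - q) = r' := by omega
        have e2 : compAlong (γ := γ) i₂ p = compAlong γ i p :=
          compAlong_congr p fun k hk => by simp only [hi₂]; rw [if_pos hk]
        have e3 : compAlong (γ := γ) (fun k => i₂ (p + k)) (r - q) = compAlong γ (fun k => i (q + k)) (r - q) := by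
          apply compAlong_congr
          intro k _
          simp only [hi₂]
          rcases Nat.eq_zero_or_pos k with h | h
          · subst h; rw [if_pos (by omega)]
            simpa using hipq
          · rw [if_neg (by omega)]
            congr 1; omega
        calc compAlong γ i₂ r' s = compAlong γ i₂ (p + (r - q)) s := by rw [e0]
          _ = compAlong γ i₂ p (compAlong γ (fun k => i₂ (p + k)) (r - q) s) := compAlong_add i₂ p _ s
          _ = compAlong γ i p u := by rw [e2, e3]
      rcases eq_or_lt_of_le hu0 with h0 | hpos
      · rw [hsplit, ← h0, compAlong_zero_pt hγ, compAlong_zero_pt hγ]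
        exact hs
      · have hBu : compAlong γ (fun k => i (p + k)) d u < u := by
          apply hSG d hd1 (by omega) _ ?_ u hpos
          show i (p + d) = i (p + 0)
          rw [hpd]
          simpa using hipq.symm
        have hBnn : 0 ≤ compAlong γ (fun k => i (p + k)) d u := compAlong_nonneg hγ _ _ hpos.le
        calc compAlong γ i r s = compAlong γ i p (compAlong γ (fun k => i (p + k)) d u) := hsplit
          _ ≤ compAlong γ i p u := compAlong_mono hγ i p hBnn hBu.le
          _ = compAlong γ i₂ r' s := hAu.symm
          _ < s := IH r' hr'r hr'1 i₂ hcyc2 s hs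
    have hn : 0 < n := (i 0).pos
    obtain ⟨p, hp, q, hq, hpq, heq⟩ :=
      Finset.exists_ne_map_eq_of_card_lt_of_maps_to
        (s := Finset.range (n + 1)) (t := (Finset.univ : Finset (Fin n)))
        (by simpa using Nat.lt_succ_self n) (fun a _ => Finset.mem_univ (i a))
    rcases Nat.lt_or_ge p q with h | h
    · exact main p q h (by simpa using Nat.lt_succ_iff.1 (Finset.mem_range.1 hq)) heq
    · have h' : q < p := by omega
      exact main q p h' (by simpa using Nat.lt_succ_iff.1 (Finset.mem_range.1 hp)) heq.symm


/-! ### Main induction -/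

lemma key : ∀ (n : ℕ) (γ : Fin n → Fin n → ℝ → ℝ), (∀ i j, K0 (γ i j)) → SmallGainCond γ →
    ∃ σ : Fin n → ℝ → ℝ, (∀ i, ClassKInf (σ i)) ∧ ∀ i j, ∀ s, 0 < s → γ i j (σ j s) < σ i s := by
  intro n
  induction n with
  | zero =>
    intro γ _ _
    exact ⟨fun _ => id, fun i => i.elim0, fun i => i.elim0⟩
  | succ n IH =>
    intro γ hγ hSG
    classical
    set L : Fin (n + 1) := Fin.last n with hL
    set γ' : Fin n → Fin n → ℝ → ℝ :=
      fun i j s => max (γ i.castSucc j.castSucc s) (γ i.castSucc L (γ L j.castSucc s)) with hγ'def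
    have hγ' : ∀ i j, K0 (γ' i j) :=
      fun i j => K0.max (hγ _ _) (K0.comp (hγ _ _) (hγ _ _))
    have expand : ∀ (r : ℕ) (i' : ℕ → Fin n) (s : ℝ), 0 ≤ s →
        ∃ (m : ℕ) (j : ℕ → Fin (n + 1)), r ≤ m ∧ j 0 = (i' 0).castSucc ∧ j m = (i' r).castSucc ∧
          compAlong γ' i' r s ≤ compAlong γ j m s := by
      intro r
      induction r with
      | zero =>
        intro i' s _
        exact ⟨0, fun _ => (i' 0).castSucc, le_rfl, rfl, rfl, le_rfl⟩
      | succ r IHr =>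
        intro i' s hs
        have ht0 : 0 ≤ γ' (i' r) (i' (r + 1)) s := (hγ' _ _).nonneg hs
        obtain ⟨m, j, hm, hj0, hjm, hle⟩ := IHr i' (γ' (i' r) (i' (r + 1)) s) ht0
        have hsplit : compAlong γ' i' (r + 1) s = compAlong γ' i' r (γ' (i' r) (i' (r + 1)) s) := rfl
        rcases max_choice (γ (i' r).castSucc (i' (r + 1)).castSucc s)
            (γ (i' r).castSucc L (γ L (i' (r + 1)).castSucc s)) with hmax | hmax
        · set j₂ : ℕ → Fin (n + 1) := fun k => if k ≤ m then j k else (i' (r + 1)).castSucc with hj₂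
          have e1 : compAlong (γ := γ) j₂ m = compAlong γ j m :=
            compAlong_congr m fun k hk => by simp only [hj₂]; rw [if_pos hk]
          have e2 : j₂ m = (i' r).castSucc := by simp only [hj₂]; rw [if_pos le_rfl, hjm]
          have e3 : j₂ (m + 1) = (i' (r + 1)).castSucc := by
            simp only [hj₂]; rw [if_neg (by omega)]
          refine ⟨m + 1, j₂, by omega, ?_, e3, ?_⟩
          · simp only [hj₂]; rw [if_pos (Nat.zero_le m)]; exact hj0
          · calc compAlong γ' i' (r + 1) s = compAlong γ' i' r (γ' (i' r) (i' (r + 1)) s) := rfl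
              _ ≤ compAlong γ j m (γ' (i' r) (i' (r + 1)) s) := hle
              _ = compAlong γ j m (γ (i' r).castSucc (i' (r + 1)).castSucc s) := by
                  rw [show γ' (i' r) (i' (r + 1)) s = max (γ (i' r).castSucc (i' (r + 1)).castSucc s)
                    (γ (i' r).castSucc L (γ L (i' (r + 1)).castSucc s)) from rfl, hmax]
              _ = compAlong γ j₂ (m + 1) s := by
                  rw [compAlong_succ, e1, e2, e3]
        · set j₂ : ℕ → Fin (n + 1) := fun k =>
            if k ≤ m then j k else if k = m + 1 then L else (i' (r + 1)).castSucc with hj₂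
          have e1 : compAlong (γ := γ) j₂ m = compAlong γ j m :=
            compAlong_congr m fun k hk => by simp only [hj₂]; rw [if_pos hk]
          have e2 : j₂ m = (i' r).castSucc := by simp only [hj₂]; rw [if_pos le_rfl, hjm]
          have e3 : j₂ (m + 1) = L := by
            simp only [hj₂]; rw [if_neg (by omega)]; simp
          have e4 : j₂ (m + 1 + 1) = (i' (r + 1)).castSucc := by
            simp only [hj₂]; rw [if_neg (by omega), if_neg (by omega)]
          refine ⟨m + 1 + 1, j₂, by omega, ?_, e4, ?_⟩
          · simp only [hj₂]; rw [if_pos (Nat.zero_le m)]; exact hj0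
          · calc compAlong γ' i' (r + 1) s = compAlong γ' i' r (γ' (i' r) (i' (r + 1)) s) := rfl
              _ ≤ compAlong γ j m (γ' (i' r) (i' (r + 1)) s) := hle
              _ = compAlong γ j m (γ (i' r).castSucc L (γ L (i' (r + 1)).castSucc s)) := by
                  rw [show γ' (i' r) (i' (r + 1)) s = max (γ (i' r).castSucc (i' (r + 1)).castSucc s)
                    (γ (i' r).castSucc L (γ L (i' (r + 1)).castSucc s)) from rfl, hmax]
              _ = compAlong γ j₂ (m + 1 + 1) s := by
                  rw [compAlong_succ, e3, e4, compAlong_succ, e1, e2, e3]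
    have hSG' : SmallGainCond γ' := by
      intro r hr1 _ i' hcyc s hs
      obtain ⟨m, j, hm, hj0, hjm, hle⟩ := expand r i' s hs.le
      have hjc : j m = j 0 := by rw [hjm, hj0, hcyc]
      exact hle.trans_lt (sg_ext hγ hSG m (by omega) j hjc s hs)
    obtain ⟨σ', hσ'K, hσ'lt⟩ := IH γ' hγ' hSG'
    have σ'nonneg : ∀ (i : Fin n) {s : ℝ}, 0 ≤ s → 0 ≤ σ' i s :=
      fun i {s} hs => K0.nonneg (Or.inl (hσ'K i)) hs
    have σ'mono : ∀ (i : Fin n) {x y : ℝ}, 0 ≤ x → x ≤ y → σ' i x ≤ σ' i y :=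
      fun i {x y} hx hxy => K0.mono (Or.inl (hσ'K i)) hx hxy
    have σ'pos : ∀ (i : Fin n) {s : ℝ}, 0 < s → 0 < σ' i s := fun i {s} hs => (hσ'K i).pos' hs
    set a : ℝ → ℝ := fun s => finMax fun j' => γ L (Fin.castSucc j') (σ' j' s) with ha
    have haeq : ∀ s, a s = finMax fun j' => γ L (Fin.castSucc j') (σ' j' s) := fun s => rfl
    have haneg : ∀ s, 0 ≤ a s := fun s => finMax_nonneg _
    have ha0 : a 0 = 0 := by
      rw [haeq]
      rcases finMax_cases (fun j' => γ L (Fin.castSucc j') (σ' j' 0)) with h | ⟨j', hj'⟩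
      · exact h
      · rw [hj', (hσ'K j').zero', (hγ _ _).zero]
    have hamono : ∀ {x y : ℝ}, 0 ≤ x → x ≤ y → a x ≤ a y := by
      intro x y hx hxy
      rw [haeq, haeq]
      exact finMax_mono_pt _ _ fun j' => (hγ _ _).mono (σ'nonneg _ hx) (σ'mono _ hx hxy)
    have hacont : ContinuousOn a (Set.Ici 0) := by
      rw [ha]
      apply finMax_continuousOn
      intro j'
      exact ContinuousOn.comp (hγ L j'.castSucc).contOn (hσ'K j').1.1
        (fun x hx => Set.mem_Ici.2 (σ'nonneg _ (Set.mem_Ici.1 hx)))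
    have halt : ∀ (i : Fin n) (s : ℝ), 0 < s → γ i.castSucc L (a s) < σ' i s := by
      intro i s hs
      rcases finMax_cases (fun j' => γ L (Fin.castSucc j') (σ' j' s)) with h | ⟨j', hj'⟩
      · rw [haeq, h, (hγ _ _).zero]
        exact σ'pos i hs
      · rw [haeq, hj']
        calc γ i.castSucc L (γ L j'.castSucc (σ' j' s))
            ≤ max (γ i.castSucc j'.castSucc (σ' j' s)) (γ i.castSucc L (γ L j'.castSucc (σ' j' s))) :=
              le_max_right _ _
          _ = γ' i j' (σ' j' s) := rfl
          _ < σ' i s := hσ'lt i j' s hs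
    set cap : Fin n → ℝ → ℝ := fun i s =>
      if h : ClassKInf (γ i.castSucc L) then (a s + kinv h (σ' i s)) / 2 else a s + s with hcap
    have haklt : ∀ (i : Fin n) (h : ClassKInf (γ i.castSucc L)) (s : ℝ), 0 < s →
        a s < kinv h (σ' i s) := by
      intro i h s hs
      by_contra hcon
      push_neg at hcon
      have h1 : γ i.castSucc L (kinv h (σ' i s)) ≤ γ i.castSucc L (a s) :=
        (hγ _ _).mono (kinv_nonneg h (σ'nonneg i hs.le)) hcon
      rw [self_comp_kinv h (σ'nonneg i hs.le)] at h1
      exact absurd (h1.trans_lt (halt i s hs)) (lt_irrefl _)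
    have hcapgt : ∀ (i : Fin n) (s : ℝ), 0 < s → a s < cap i s := by
      intro i s hs
      by_cases h : ClassKInf (γ i.castSucc L)
      · have h1 := haklt i h s hs
        simp only [hcap]
        rw [dif_pos h]
        linarith
      · simp only [hcap]
        rw [dif_neg h]
        linarith
    set σL : ℝ → ℝ := fun s => finMin (fun i => cap i s) (a s + s) with hσL
    have hσLeq : ∀ s, σL s = finMin (fun i => cap i s) (a s + s) := fun s => rfl
    have hσLgta : ∀ s : ℝ, 0 < s → a s < σL s := by
      intro s hs
      rw [hσLeq]
      rcases finMin_cases (fun i => cap i s) (a s + s) with h | ⟨i, hi⟩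
      · rw [h]; linarith
      · rw [hi]; exact hcapgt i s hs
    have hσLpos : ∀ s : ℝ, 0 < s → 0 < σL s := fun s hs => (haneg s).trans_lt (hσLgta s hs)
    have hσLcont : ContinuousOn σL (Set.Ici 0) := by
      rw [hσL]
      apply finMin_continuousOn
      · exact hacont.add continuousOn_id
      · intro i
        by_cases h : ClassKInf (γ i.castSucc L)
        · have hc : cap i = fun s => (a s + kinv h (σ' i s)) / 2 := by
            funext s; simp only [hcap]; rw [dif_pos h]
          rw [hc]
          exact (hacont.add ((kinv_continuous h).comp_continuousOn (hσ'K i).1.1)).div_const 2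
        · have hc : cap i = fun s => a s + s := by
            funext s; simp only [hcap]; rw [dif_neg h]
          rw [hc]
          exact hacont.add continuousOn_id
    have hσLsm : StrictMonoOn σL (Set.Ici 0) := by
      intro x hx y hy hxy
      have hx0 : (0:ℝ) ≤ x := Set.mem_Ici.1 hx
      rw [hσLeq, hσLeq]
      apply finMin_lt
      · have := hamono hx0 hxy.le; linarith
      · intro i
        by_cases h : ClassKInf (γ i.castSucc L)
        · simp only [hcap]
          rw [dif_pos h, dif_pos h]
          have h1 : kinv h (σ' i x) < kinv h (σ' i y) :=
            kinv_strictMono h ((hσ'K i).lt' hx0 hxy)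
          have h2 := hamono hx0 hxy.le
          linarith
        · simp only [hcap]
          rw [dif_neg h, dif_neg h]
          have h2 := hamono hx0 hxy.le
          linarith
    have hσL0 : σL 0 = 0 := by
      rw [hσLeq]
      rcases finMin_cases (fun i => cap i 0) (a 0 + 0) with h | ⟨i, hi⟩
      · rw [h, ha0]; ring
      · rw [hi]
        by_cases h : ClassKInf (γ i.castSucc L)
        · simp only [hcap]
          rw [dif_pos h, ha0, (hσ'K i).zero', kinv_zero h]
          ring
        · simp only [hcap]
          rw [dif_neg h, ha0]
          ring
    have hσLtop : Filter.Tendsto σL atTop atTop := by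
      rw [hσL]
      apply finMin_tendsto
      · apply tendsto_atTop_mono (f := fun s : ℝ => s) (fun s => ?_) tendsto_id
        have := haneg s; linarith
      · intro i
        by_cases h : ClassKInf (γ i.castSucc L)
        · have hT : Filter.Tendsto (fun s => kinv h (σ' i s) / 2) atTop atTop :=
            ((kinv_tendsto h).comp (hσ'K i).2).atTop_div_const two_pos
          apply tendsto_atTop_mono (fun s => ?_) hT
          simp only [hcap]
          rw [dif_pos h]
          have := haneg s; linarith
        · apply tendsto_atTop_mono (f := fun s : ℝ => s) (fun s => ?_) tendsto_id
          simp only [hcap]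
          rw [dif_neg h]
          have := haneg s; linarith
    have hσLK : ClassKInf σL := ⟨⟨hσLcont, hσLsm, hσL0⟩, hσLtop⟩
    refine ⟨fun i => Fin.lastCases σL σ' i, ?_, ?_⟩
    · intro i
      induction i using Fin.lastCases with
      | last => simpa using hσLK
      | cast i => simpa using hσ'K i
    · intro i j s hs
      induction i using Fin.lastCases with
      | last =>
        induction j using Fin.lastCases with
        | last =>
          simp only [Fin.lastCases_last]
          have h1 := hSG 1 le_rfl (by omega) (fun _ => L) rfl (σL s) (hσLpos s hs)
          simpa [compAlong] using h1
        | cast j =>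
          simp only [Fin.lastCases_last, Fin.lastCases_castSucc]
          have h1 : γ L j.castSucc (σ' j s) ≤ a s := by
            rw [haeq]
            exact le_finMax (fun j' => γ L (Fin.castSucc j') (σ' j' s)) j
          exact h1.trans_lt (hσLgta s hs)
      | cast i =>
        induction j using Fin.lastCases with
        | last =>
          simp only [Fin.lastCases_last, Fin.lastCases_castSucc]
          by_cases h : ClassKInf (γ i.castSucc L)
          · have h1 : σL s ≤ cap i s := by
              rw [hσLeq]
              exact finMin_le (fun i' => cap i' s) (a s + s) i
            have h2 : cap i s < kinv h (σ' i s) := by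
              have := haklt i h s hs
              simp only [hcap]
              rw [dif_pos h]
              linarith
            have h4 : γ i.castSucc L (σL s) < γ i.castSucc L (kinv h (σ' i s)) :=
              h.lt' (hσLpos s hs).le (h1.trans_lt h2)
            rwa [self_comp_kinv h (σ'nonneg i hs.le)] at h4
          · have h0 : γ i.castSucc L = 0 := Or.resolve_left (hγ i.castSucc L) h
            rw [h0]
            simpa using σ'pos i hs
        | cast j =>
          simp only [Fin.lastCases_castSucc]
          calc γ i.castSucc j.castSucc (σ' j s)
              ≤ max (γ i.castSucc j.castSucc (σ' j s)) (γ i.castSucc L (γ L j.castSucc (σ' j s))) :=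
                le_max_left _ _
            _ = γ' i j (σ' j s) := rfl
            _ < σ' i s := hσ'lt i j s hs

end SG6

/-- the cyclic small-gain condition yields K∞ scalings σᵢ with
`maxⱼ σᵢ⁻¹ ∘ γᵢⱼ ∘ σⱼ < id`. -/
theorem smallgain_scaling (ℓ : ℕ) (hℓ : 0 < ℓ)
    (γ : Fin ℓ → Fin ℓ → ℝ → ℝ) (hγ : ∀ i j, ClassKInf (γ i j) ∨ γ i j = 0)
    (hSG : SmallGainCond γ) :
    ∃ σ σinv : Fin ℓ → ℝ → ℝ,
      (∀ i, ClassKInf (σ i)) ∧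
      (∀ i, ∀ s ≥ (0:ℝ), σinv i (σ i s) = s ∧ σ i (σinv i s) = s) ∧
      ∀ i j, ∀ s > (0:ℝ), σinv i (γ i j (σ j s)) < s := by
  obtain ⟨σ, hσK, hσlt⟩ := SG6.key ℓ γ (fun i j => hγ i j) hSG
  refine ⟨σ, fun i => SG6.kinv (hσK i), hσK, ?_, ?_⟩
  · intro i s hs
    exact ⟨SG6.kinv_comp_self (hσK i) hs, SG6.self_comp_kinv (hσK i) hs⟩
  · intro i j s hs
    have h1 : γ i j (σ j s) < σ i s := hσlt i j s hs
    have h2 := SG6.kinv_strictMono (hσK i) h1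
    rwa [SG6.kinv_comp_self (hσK i) hs.le] at h2
end

section
/- Let α_max(s) := max{s − s², s/2} for s ≥ 0. Then α_max is a class-K∞ function satisfying α_max(s) < s for all s > 0, and for every s₀ > 0 the sequence s_{k+1} = α_max(s_k), s_0 = s₀, satisfies s_{k+1}/s_k → 1 as k → ∞; in particular, there exist no constants C ≥ 1 and τ ∈ (0,1) with α_max^k(s) ≤ Cτ^k s for all s > 0 and k ∈ ℕ. -/
open Filter Topology

noncomputable def am (s : ℝ) : ℝ := max (s - s ^ 2) (s / 2)

lemma am_cont : Continuous am :=
  (continuous_id.sub (continuous_pow 2)).max (continuous_id.div_const 2)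

lemma am_half_le (s : ℝ) : s / 2 ≤ am s := le_max_right _ _

lemma am_pos {s : ℝ} (hs : 0 < s) : 0 < am s :=
  lt_of_lt_of_le (half_pos hs) (am_half_le s)

lemma am_lt {s : ℝ} (hs : 0 < s) : am s < s :=
  max_lt (by nlinarith) (half_lt_self hs)

lemma am_le {s : ℝ} (hs : 0 ≤ s) : am s ≤ s := by
  rcases eq_or_lt_of_le hs with h | h
  · simp [am, ← h]
  · exact (am_lt h).le

lemma am_zero : am 0 = 0 := by simp [am]

lemma am_mono : StrictMonoOn am (Set.Ici 0) := by
  intro a ha b hb hab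
  simp only [Set.mem_Ici] at ha hb
  refine max_lt ?_ (lt_of_lt_of_le (by linarith) (le_max_right _ _))
  rcases le_or_gt b (1/2) with h | h
  · exact lt_of_lt_of_le (by nlinarith) (le_max_left _ _)
  · exact lt_of_lt_of_le (by nlinarith) (le_max_right _ _)

lemma am_small {s : ℝ} (h0 : 0 ≤ s) (h : s ≤ 1/2) : am s = s - s ^ 2 :=
  max_eq_left (by nlinarith)

lemma am_iter_pos {s₀ : ℝ} (h : 0 < s₀) (k : ℕ) : 0 < am^[k] s₀ := by
  induction k with
  | zero => simpa using h
  | succ n ih => rw [Function.iterate_succ_apply']; exact am_pos ih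

lemma am_iter_anti {s₀ : ℝ} (h : 0 < s₀) : Antitone (fun k => am^[k] s₀) := by
  refine antitone_nat_of_succ_le fun n => ?_
  rw [Function.iterate_succ_apply']
  exact am_le (am_iter_pos h n).le

lemma am_iter_tendsto_zero {s₀ : ℝ} (h : 0 < s₀) :
    Tendsto (fun k => am^[k] s₀) atTop (𝓝 0) := by
  have hbdd : BddBelow (Set.range fun k => am^[k] s₀) :=
    ⟨0, by rintro x ⟨k, rfl⟩; exact (am_iter_pos h k).le⟩
  have hL := tendsto_atTop_ciInf (am_iter_anti h) hbdd
  set L := ⨅ k, am^[k] s₀ with hLdef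
  have hL0 : 0 ≤ L := le_ciInf fun k => (am_iter_pos h k).le
  have h1 : Tendsto (fun k => am^[k+1] s₀) atTop (𝓝 L) :=
    hL.comp (tendsto_add_atTop_nat 1)
  have h2 : Tendsto (fun k => am (am^[k] s₀)) atTop (𝓝 (am L)) :=
    (am_cont.tendsto L).comp hL
  have heq : (fun k => am^[k+1] s₀) = fun k => am (am^[k] s₀) := by
    funext k; rw [Function.iterate_succ_apply']
  rw [heq] at h1
  have hfix : am L = L := tendsto_nhds_unique h2 h1
  have : L = 0 := by
    by_contra hne
    have hLpos : 0 < L := lt_of_le_of_ne hL0 (Ne.symm hne)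
    exact absurd hfix (ne_of_lt (am_lt hLpos))
  rwa [this] at hL

lemma am_ratio {s₀ : ℝ} (h : 0 < s₀) :
    Tendsto (fun k => am^[k+1] s₀ / am^[k] s₀) atTop (𝓝 1) := by
  have hz := am_iter_tendsto_zero h
  have hsmall : ∀ᶠ k in atTop, am^[k] s₀ < 1/2 :=
    hz.eventually (gt_mem_nhds (by norm_num : (0:ℝ) < 1/2))
  have heq : (fun k => am^[k+1] s₀ / am^[k] s₀) =ᶠ[atTop]
      fun k => 1 - am^[k] s₀ := by
    filter_upwards [hsmall] with k hk
    have hp := am_iter_pos h k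
    rw [Function.iterate_succ_apply', am_small hp.le hk.le]
    field_simp
  have : Tendsto (fun k => 1 - am^[k] s₀) atTop (𝓝 1) := by
    simpa using tendsto_const_nhds.sub hz
  exact this.congr' heq.symm

/-- properties of α_max(s) = max{s − s², s/2}: class K∞, strictly
below the identity, asymptotic (non-exponential) decay of its iterates. -/
theorem alphamax_properties :
    ClassKInf (fun s : ℝ => max (s - s ^ 2) (s / 2)) ∧
    (∀ s > (0:ℝ), max (s - s ^ 2) (s / 2) < s) ∧
    (∀ s₀ > (0:ℝ),
      Filter.Tendsto
        (fun k : ℕ => (fun s : ℝ => max (s - s ^ 2) (s / 2))^[k + 1] s₀ /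
          (fun s : ℝ => max (s - s ^ 2) (s / 2))^[k] s₀)
        Filter.atTop (nhds 1)) ∧
    ¬ ∃ C : ℝ, 1 ≤ C ∧ ∃ τ : ℝ, τ ∈ Set.Ioo (0:ℝ) 1 ∧
        ∀ s > (0:ℝ), ∀ k : ℕ,
          (fun s : ℝ => max (s - s ^ 2) (s / 2))^[k] s ≤ C * τ ^ k * s := by
  have key : ClassKInf am ∧ (∀ s > (0:ℝ), am s < s) ∧
      (∀ s₀ > (0:ℝ), Tendsto (fun k : ℕ => am^[k+1] s₀ / am^[k] s₀) atTop (𝓝 1)) ∧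
      ¬ ∃ C : ℝ, 1 ≤ C ∧ ∃ τ : ℝ, τ ∈ Set.Ioo (0:ℝ) 1 ∧
        ∀ s > (0:ℝ), ∀ k : ℕ, am^[k] s ≤ C * τ ^ k * s := by
    refine ⟨⟨⟨am_cont.continuousOn, am_mono, am_zero⟩, ?_⟩,
      fun s hs => am_lt hs, fun s₀ hs₀ => am_ratio hs₀, ?_⟩
    · refine tendsto_atTop_mono am_half_le ?_
      exact tendsto_id.atTop_div_const (by norm_num)
    · rintro ⟨C, hC, τ, ⟨hτ0, hτ1⟩, H⟩
      set s : ℕ → ℝ := fun k => am^[k] (1:ℝ) with hs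
      have hsp : ∀ k, 0 < s k := am_iter_pos one_pos
      set τ' : ℝ := (1 + τ) / 2 with hτ'
      have hτ'0 : 0 < τ' := by positivity
      have hτ'1 : τ' < 1 := by simp only [hτ']; linarith
      have hττ' : τ < τ' := by simp only [hτ']; linarith
      have hev : ∀ᶠ k in atTop, τ' < s (k + 1) / s k :=
        (am_ratio one_pos).eventually (lt_mem_nhds hτ'1)
      obtain ⟨N, hN⟩ := eventually_atTop.1 hev
      have hstep : ∀ k, N ≤ k → τ' * s k ≤ s (k + 1) := fun k hk =>
        ((lt_div_iff₀ (hsp k)).1 (hN k hk)).le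
      have hgeo : ∀ m, τ' ^ m * s N ≤ s (N + m) := by
        intro m
        induction m with
        | zero => simp
        | succ n ih =>
          have h1 := hstep (N + n) (Nat.le_add_right N n)
          calc τ' ^ (n + 1) * s N = τ' * (τ' ^ n * s N) := by ring
            _ ≤ τ' * s (N + n) := by nlinarith
            _ ≤ s (N + n + 1) := h1
            _ = s (N + (n + 1)) := by ring_nf
      have hK : ∀ m, (τ' / τ) ^ m ≤ C * τ ^ N / s N := by
        intro m
        have h1 := H 1 one_pos (N + m)
        rw [mul_one] at h1
        have h2 : τ' ^ m * s N ≤ C * τ ^ N * τ ^ m := by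
          rw [pow_add] at h1
          calc τ' ^ m * s N ≤ s (N + m) := hgeo m
            _ ≤ C * (τ ^ N * τ ^ m) := h1
            _ = C * τ ^ N * τ ^ m := by ring
        rw [div_pow, div_le_div_iff₀ (pow_pos hτ0 m) (hsp N)]
        linarith
      have hdiv : (1:ℝ) < τ' / τ := (one_lt_div hτ0).2 hττ'
      obtain ⟨m, hm⟩ :=
        ((tendsto_pow_atTop_atTop_of_one_lt hdiv).eventually_gt_atTop
          (C * τ ^ N / s N)).exists
      exact absurd (hK m) (not_le.2 hm)
  exact key
end

section
/- For the system x(k+1) = g(x(k),u(k)) on ℝ² with g₁(ξ,μ) = max{ξ₂ − ξ₂², ξ₂/2, μ} and g₂(ξ,μ) = max{ξ₁ − ξ₁², ξ₁/2, μ}, the function V(ξ) := max{|ξ₁|,|ξ₂|} satisfies V(g(ξ,μ)) ≤ max{α_max(V(ξ)), |μ|} for all ξ ∈ ℝ², μ ∈ ℝ, where α_max(s) = max{s − s², s/2}; hence V is a max-form ISS Lyapunov function for the system. -/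
open Filter Topology

lemma key_abs_bound (a M μ : ℝ) (ha : |a| ≤ M) :
    |max (a - a ^ 2) (max (a / 2) μ)| ≤ max (max (M - M ^ 2) (M / 2)) |μ| := by
  have h1 : -M ≤ a := neg_le_of_abs_le ha
  have h2 : a ≤ M := le_of_abs_le ha
  have hM : 0 ≤ M := le_trans (abs_nonneg a) ha
  rw [abs_le]
  constructor
  · have : -(M / 2) ≤ a / 2 := by linarith
    have hle : a / 2 ≤ max (a - a ^ 2) (max (a / 2) μ) :=
      le_trans (le_max_left _ _) (le_max_right _ _)
    have : M / 2 ≤ max (max (M - M ^ 2) (M / 2)) |μ| :=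
      le_trans (le_max_right _ _) (le_max_left _ _)
    linarith
  · apply max_le
    · refine le_trans ?_ (le_max_left _ _)
      rcases le_total M (1 / 2) with hc | hc
      · refine le_trans ?_ (le_max_left _ _)
        rcases le_total a 0 with h0 | h0 <;> nlinarith
      · refine le_trans ?_ (le_max_right _ _)
        nlinarith [sq_nonneg (a - 1 / 2)]
    · apply max_le
      · refine le_trans ?_ (le_trans (le_max_right _ _) (le_max_left _ _))
        linarith
      · exact le_trans (le_abs_self μ) (le_max_right _ _)

/-- V(ξ) = max{|ξ₁|,|ξ₂|} is a max-form ISS Lyapunov function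
for the example system, with α_max(s) = max{s − s², s/2} and γ_max = id. -/
theorem example_maxform_Lyapunov :
    ClassKInf (fun s : ℝ => max (s - s ^ 2) (s / 2)) ∧
    (∀ s > (0:ℝ), max (s - s ^ 2) (s / 2) < s) ∧
    ∀ (ξ : ℝ × ℝ) (μ : ℝ),
      max |max (ξ.2 - ξ.2 ^ 2) (max (ξ.2 / 2) μ)|
          |max (ξ.1 - ξ.1 ^ 2) (max (ξ.1 / 2) μ)| ≤
        max (max ((max |ξ.1| |ξ.2|) - (max |ξ.1| |ξ.2|) ^ 2) ((max |ξ.1| |ξ.2|) / 2)) |μ| := by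
  constructor
  · constructor
    · refine ⟨(by continuity : Continuous fun s : ℝ => max (s - s ^ 2) (s / 2)).continuousOn,
        ?_, by norm_num⟩
      intro a ha b hb hab
      simp only [Set.mem_Ici] at ha hb
      apply max_lt
      · rcases le_total b (1 / 2) with hc | hc
        · exact lt_max_of_lt_left (by nlinarith)
        · exact lt_max_of_lt_right (by nlinarith [sq_nonneg (a - 1 / 2)])
      · exact lt_max_of_lt_right (by linarith)
    · apply tendsto_atTop_mono (fun s => le_max_right (s - s ^ 2) (s / 2))
      exact Tendsto.atTop_div_const (by norm_num) tendsto_id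
  constructor
  · intro s hs
    apply max_lt <;> nlinarith
  · intro ξ μ
    apply max_le
    · exact key_abs_bound ξ.2 _ μ (le_max_right _ _)
    · exact key_abs_bound ξ.1 _ μ (le_max_left _ _)
end

section
/- For the planar system r(k+1) = r(k) + 1 + sin(θ(k)), θ(k+1) = (1/4)(1 + sin(θ(k))) + θ(k) in polar-type coordinates, the measurement function ω(r,θ) := 1 + sin(θ) satisfies: along every solution, the sequence θ(k) is nondecreasing, and ω(r(k),θ(k)) → 0 as k → ∞, i.e., θ(k) converges to a point θ* with sin(θ*) = −1. -/
open Filter Topology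

lemma key_step (M x : ℝ) (hM : Real.sin M = -1) (hcM : Real.cos M = 0)
    (h1 : M - 2 * Real.pi ≤ x) (h2 : x ≤ M) :
    x + (1 / 4) * (1 + Real.sin x) ≤ M := by
  set t := x - M with ht
  have hsin : Real.sin x = -Real.cos t := by
    have hx : x = t + M := by ring
    rw [hx, Real.sin_add, hM, hcM]; ring
  have hcos : 1 - Real.cos t ≤ t ^ 2 / 2 := by
    have h := Real.sin_sq_add_cos_sq (t / 2)
    have hc : Real.cos t = 2 * Real.cos (t / 2) ^ 2 - 1 := by
      have h2m := Real.cos_two_mul (t / 2)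
      rw [show 2 * (t / 2) = t by ring] at h2m
      linarith
    have hs2 : Real.sin (t / 2) ^ 2 ≤ (t / 2) ^ 2 := Real.sin_sq_le_sq
    nlinarith
  have hpi : Real.pi ≤ 4 := by linarith [Real.pi_le_four]
  have ht1 : -2 * Real.pi ≤ t := by simp only [ht]; linarith
  have ht2 : t ≤ 0 := by simp only [ht]; linarith
  have h8 : t ^ 2 / 8 ≤ -t := by nlinarith
  nlinarith

/-- for the polar-coordinate system, θ is nondecreasing,
ω(r,θ) = 1 + sin θ tends to 0 along solutions, and θ converges to some θ*
with sin θ* = −1. -/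
theorem polar_system_convergence (r θ : ℕ → ℝ)
    (hr : ∀ k, r (k + 1) = r k + 1 + Real.sin (θ k))
    (hθ : ∀ k, θ (k + 1) = (1 / 4) * (1 + Real.sin (θ k)) + θ k) :
    Monotone θ ∧
    Filter.Tendsto (fun k => 1 + Real.sin (θ k)) Filter.atTop (nhds 0) ∧
    ∃ θstar : ℝ, Filter.Tendsto θ Filter.atTop (nhds θstar) ∧
      Real.sin θstar = -1 := by
  have hpos : ∀ x : ℝ, 0 ≤ 1 + Real.sin x := fun x => by
    have := Real.neg_one_le_sin x; linarith
  have hmono : Monotone θ := monotone_nat_of_le_succ fun k => by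
    have := hpos (θ k); rw [hθ k]; linarith
  -- define the upper bound M
  set n : ℤ := ⌈(θ 0 + Real.pi / 2) / (2 * Real.pi)⌉ with hn
  set M : ℝ := -(Real.pi / 2) + 2 * Real.pi * n with hMdef
  have hpipos := Real.pi_pos
  have hsinM : Real.sin M = -1 := by
    rw [hMdef, show -(Real.pi / 2) + 2 * Real.pi * (n : ℝ) = -(Real.pi / 2) + (n : ℝ) * (2 * Real.pi) by ring,
      Real.sin_add_int_mul_two_pi, Real.sin_neg, Real.sin_pi_div_two]
  have hcosM : Real.cos M = 0 := by
    rw [hMdef, show -(Real.pi / 2) + 2 * Real.pi * (n : ℝ) = -(Real.pi / 2) + (n : ℝ) * (2 * Real.pi) by ring,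
      Real.cos_add_int_mul_two_pi, Real.cos_neg, Real.cos_pi_div_two]
  have hθ0M : θ 0 ≤ M := by
    have h1 : (θ 0 + Real.pi / 2) / (2 * Real.pi) ≤ (n : ℝ) := Int.le_ceil _
    have h2 : θ 0 + Real.pi / 2 ≤ (n : ℝ) * (2 * Real.pi) :=
      (div_le_iff₀ (by linarith)).1 h1
    rw [hMdef]; linarith
  have hMθ0 : M - 2 * Real.pi ≤ θ 0 := by
    have h1 : (n : ℝ) < (θ 0 + Real.pi / 2) / (2 * Real.pi) + 1 := Int.ceil_lt_add_one _
    have h2 : (n : ℝ) * (2 * Real.pi) < θ 0 + Real.pi / 2 + 2 * Real.pi := by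
      have := mul_lt_mul_of_pos_right h1 (by linarith : (0:ℝ) < 2 * Real.pi)
      calc (n : ℝ) * (2 * Real.pi) < ((θ 0 + Real.pi / 2) / (2 * Real.pi) + 1) * (2 * Real.pi) := this
        _ = θ 0 + Real.pi / 2 + 2 * Real.pi := by field_simp
    rw [hMdef]; linarith
  have hbdd : ∀ k, θ k ≤ M := by
    intro k
    induction k with
    | zero => exact hθ0M
    | succ k ih =>
      have hlow : M - 2 * Real.pi ≤ θ k := hMθ0.trans (hmono (Nat.zero_le k))
      rw [hθ k]
      have := key_step M (θ k) hsinM hcosM hlow ih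
      linarith
  have hbddA : BddAbove (Set.range θ) := ⟨M, by rintro _ ⟨k, rfl⟩; exact hbdd k⟩
  have hconv : Filter.Tendsto θ Filter.atTop (nhds (⨆ k, θ k)) :=
    tendsto_atTop_ciSup hmono hbddA
  set θstar := ⨆ k, θ k with hts
  have hconv' : Filter.Tendsto (fun k => θ (k + 1)) Filter.atTop (nhds θstar) :=
    hconv.comp (Filter.tendsto_add_atTop_nat 1)
  have hdiff : Filter.Tendsto (fun k => θ (k + 1) - θ k) Filter.atTop (nhds 0) := by
    simpa using hconv'.sub hconv
  have homega : Filter.Tendsto (fun k => 1 + Real.sin (θ k)) Filter.atTop (nhds 0) := by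
    have heq : (fun k => 1 + Real.sin (θ k)) = fun k => 4 * (θ (k + 1) - θ k) := by
      funext k; rw [hθ k]; ring
    rw [heq, show (0:ℝ) = 4 * 0 by ring]
    exact hdiff.const_mul 4
  refine ⟨hmono, homega, θstar, hconv, ?_⟩
  have hsc : Filter.Tendsto (fun k => 1 + Real.sin (θ k)) Filter.atTop (nhds (1 + Real.sin θstar)) :=
    (continuous_const.add (Real.continuous_sin.comp continuous_id)).continuousAt.tendsto.comp hconv
  have := tendsto_nhds_unique homega hsc
  linarith
end

section
/- If α ∈ K∞ satisfies α(s) < s for all s > 0, then for every s ≥ 0 the iterates α^k(s) converge to 0 as k → ∞, and moreover there exists a class-KL function β with α^k(s) ≤ β(s,k) for all s ≥ 0 and k ∈ ℕ (e.g., one may take β such that β(s,k) ≥ α^k(s) and β(s,·) nonincreasing to 0, β(·,k) ∈ K). -/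
open Filter Topology

/-!
The iterates `α^[k] s` decrease and stay nonnegative, so they converge; by continuity the limit is
a fixed point of `α`, hence `0`. For `β` take the piecewise linear interpolation in the time
variable of `k ↦ α^[k] s`: it is still continuous, strictly increasing in `s`, and decreases to
`0` in `t`.
-/

open Set Function

section Iterate

variable {γ : Type*} [Preorder γ] {f : γ → γ} {s : Set γ}

protected theorem StrictMonoOn.iterate (hf : StrictMonoOn f s) (hmaps : MapsTo f s s) :
    ∀ n, StrictMonoOn f^[n] s
  | 0 => strictMonoOn_id
  | n + 1 => (hf.iterate hmaps n).comp hf hmaps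

theorem antitone_iterate_apply (hmaps : MapsTo f s s) (hle : ∀ x ∈ s, f x ≤ x) {x : γ}
    (hx : x ∈ s) : Antitone fun n => f^[n] x :=
  antitone_nat_of_succ_le fun n => by
    rw [iterate_succ_apply']
    exact hle _ (hmaps.iterate n hx)

theorem tendsto_iterate_nhds_zero {α : ℝ → ℝ} (hc : ContinuousOn α (Ici 0))
    (hmaps : MapsTo α (Ici 0) (Ici 0)) (hle : ∀ x ∈ Ici (0 : ℝ), α x ≤ x)
    (hfix : ∀ x > (0 : ℝ), α x ≠ x) {s : ℝ} (hs : 0 ≤ s) :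
    Tendsto (fun k : ℕ => α^[k] s) atTop (𝓝 0) := by
  have hnonneg : ∀ k, 0 ≤ α^[k] s := fun k => hmaps.iterate k hs
  have hlim := tendsto_atTop_ciInf (antitone_iterate_apply hmaps hle hs)
    ⟨0, forall_mem_range.2 hnonneg⟩
  set L := ⨅ k, α^[k] s
  obtain hL | hL : 0 < L ∨ 0 = L := (le_ciInf hnonneg).lt_or_eq
  · have hcL : ContinuousAt α L := hc.continuousAt (Ici_mem_nhds hL)
    exact absurd (isFixedPt_of_tendsto_iterate hlim hcL) (hfix L hL)
  · rwa [← hL] at hlim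

end Iterate

section LinearInterpolation

def ramp (k : ℕ) (t : ℝ) : ℝ := min (max (t - k) 0) 1

theorem continuous_ramp (k : ℕ) : Continuous (ramp k) := by
  unfold ramp; fun_prop

theorem monotone_ramp (k : ℕ) : Monotone (ramp k) := fun _ _ h => by
  unfold ramp; gcongr

theorem ramp_of_le {k : ℕ} {t : ℝ} (h : t ≤ k) : ramp k t = 0 := by
  unfold ramp; rw [max_eq_right (by linarith), min_eq_left zero_le_one]

theorem ramp_of_ge {k : ℕ} {t : ℝ} (h : (k : ℝ) + 1 ≤ t) : ramp k t = 1 := by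
  unfold ramp; rw [max_eq_left (by linarith), min_eq_right (by linarith)]

theorem ramp_of_mem {k : ℕ} {t : ℝ} (h₁ : (k : ℝ) ≤ t) (h₂ : t ≤ k + 1) : ramp k t = t - k := by
  unfold ramp; rw [max_eq_left (by linarith), min_eq_left (by linarith)]

theorem support_ramp_mul_subset (t : ℝ) (c : ℕ → ℝ) :
    support (fun k => ramp k t * c k) ⊆ Finset.range (⌊t⌋₊ + 1) := by
  intro k hk
  by_contra hkt
  have htk : t ≤ k := by
    have : (⌊t⌋₊ : ℝ) + 1 ≤ k := by exact_mod_cast not_lt.1 (by simpa using hkt)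
    linarith [Nat.lt_floor_add_one t]
  simp [ramp_of_le htk] at hk

variable {X : Type*} {f : ℕ → X → ℝ}

/-- For `t ≥ 0` this is the linear interpolation of `k ↦ f k x` between integer times
(`linInterp_eq`); as a locally finite sum of ramps it is visibly jointly continuous. -/
noncomputable def linInterp (f : ℕ → X → ℝ) (x : X) (t : ℝ) : ℝ :=
  f 0 x + ∑ᶠ k : ℕ, ramp k t * (f (k + 1) x - f k x)

theorem linInterp_eq (x : X) {t : ℝ} (ht : 0 ≤ t) :
    linInterp f x t = f ⌊t⌋₊ x + (t - ⌊t⌋₊) * (f (⌊t⌋₊ + 1) x - f ⌊t⌋₊ x) := by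
  set n := ⌊t⌋₊
  have hn : (n : ℝ) ≤ t := Nat.floor_le ht
  have hn' : t ≤ n + 1 := (Nat.lt_floor_add_one t).le
  have hfull : ∀ k ∈ Finset.range n,
      ramp k t * (f (k + 1) x - f k x) = f (k + 1) x - f k x := fun k hk => by
    have : (k : ℝ) + 1 ≤ n := by exact_mod_cast Finset.mem_range.1 hk
    rw [ramp_of_ge (by linarith), one_mul]
  rw [linInterp, finsum_eq_sum_of_support_subset _ (support_ramp_mul_subset t _),
    Finset.sum_range_succ, Finset.sum_congr rfl hfull, Finset.sum_range_sub (f · x),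
    ramp_of_mem hn hn']
  ring

theorem linInterp_natCast (x : X) (k : ℕ) : linInterp f x k = f k x := by
  simp [linInterp_eq x k.cast_nonneg]

theorem linInterp_of_forall_eq_zero {x : X} (h : ∀ k, f k x = 0) (t : ℝ) :
    linInterp f x t = 0 := by
  simp [linInterp, h]

theorem continuous_linInterp [TopologicalSpace X] (hf : ∀ k, Continuous (f k)) :
    Continuous fun p : X × ℝ => linInterp f p.1 p.2 := by
  refine ((hf 0).comp continuous_fst).add (continuous_finsum (fun k => ?_) fun p => ?_)
  · exact ((continuous_ramp k).comp continuous_snd).mul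
      (((hf (k + 1)).comp continuous_fst).sub ((hf k).comp continuous_fst))
  · refine ⟨{q | q.2 < p.2 + 1}, (isOpen_lt continuous_snd continuous_const).mem_nhds
      (lt_add_one p.2), (finite_lt_nat ⌈p.2 + 1⌉₊).subset ?_⟩
    rintro k ⟨q, hq, hqp : q.2 < p.2 + 1⟩
    have hkq : (k : ℝ) < q.2 := by
      by_contra! h
      simp [ramp_of_le h] at hq
    exact Nat.lt_ceil.2 (hkq.trans hqp)

theorem antitone_linInterp {x : X} (hf : Antitone (f · x)) : Antitone (linInterp f x) :=
  fun _ _ htt' => add_le_add le_rfl (finsum_le_finsum'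
    ((Finset.finite_toSet _).subset (support_ramp_mul_subset _ _))
    ((Finset.finite_toSet _).subset (support_ramp_mul_subset _ _))
    fun k => mul_le_mul_of_nonpos_right (monotone_ramp k htt') (sub_nonpos.2 (hf k.le_succ)))

theorem tendsto_linInterp_atTop {x : X} {L : ℝ} (hf : Antitone (f · x))
    (hlim : Tendsto (f · x) atTop (𝓝 L)) : Tendsto (linInterp f x) atTop (𝓝 L) := by
  refine tendsto_of_tendsto_of_tendsto_of_le_of_le' (hlim.comp tendsto_nat_ceil_atTop)
    (hlim.comp tendsto_nat_floor_atTop) (Eventually.of_forall fun t => ?_) ?_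
  · simpa [linInterp_natCast] using antitone_linInterp hf (Nat.le_ceil t)
  · filter_upwards [eventually_ge_atTop 0] with t ht
    simpa [linInterp_natCast] using antitone_linInterp hf (Nat.floor_le ht)

theorem strictMonoOn_linInterp [Preorder X] {S : Set X} (hf : ∀ k, StrictMonoOn (f k) S)
    {t : ℝ} (ht : 0 ≤ t) : StrictMonoOn (linInterp f · t) S := by
  intro x hx y hy hxy
  have h₀ := hf ⌊t⌋₊ hx hy hxy
  have h₁ := hf (⌊t⌋₊ + 1) hx hy hxy
  have hθ₀ : 0 ≤ t - ⌊t⌋₊ := sub_nonneg.2 (Nat.floor_le ht)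
  have hθ₁ : t - ⌊t⌋₊ < 1 := by linarith [Nat.lt_floor_add_one t]
  simp only [linInterp_eq _ ht]
  nlinarith

theorem classKL_linInterp {f : ℕ → ℝ → ℝ} (hcont : ∀ k, Continuous (f k))
    (hmono : ∀ k, StrictMonoOn (f k) (Ici 0)) (hzero : ∀ k, f k 0 = 0)
    (hanti : ∀ s ≥ (0 : ℝ), Antitone (f · s))
    (hlim : ∀ s ≥ (0 : ℝ), Tendsto (f · s) atTop (𝓝 0)) : ClassKL (linInterp f) :=
  ⟨(continuous_linInterp hcont).continuousOn,
    fun t ht => ⟨((continuous_linInterp hcont).comp (.prodMk_left t)).continuousOn,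
      strictMonoOn_linInterp hmono ht, linInterp_of_forall_eq_zero hzero t⟩,
    fun s hs => ⟨(antitone_linInterp (hanti s hs)).antitoneOn _,
      tendsto_linInterp_atTop (hanti s hs) (hlim s hs)⟩⟩

end LinearInterpolation

/-- iterates of a class-K∞ function strictly below the identity
converge to zero and are dominated by a class-KL function. -/
theorem iterates_to_KL (α : ℝ → ℝ) (hα : ClassKInf α) (hαlt : ∀ s > (0:ℝ), α s < s) :
    (∀ s ≥ (0:ℝ), Filter.Tendsto (fun k : ℕ => α^[k] s) Filter.atTop (nhds 0)) ∧
    ∃ β, ClassKL β ∧ ∀ s ≥ (0:ℝ), ∀ k : ℕ, α^[k] s ≤ β s (k : ℝ) := by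
  obtain ⟨⟨hc, hm, h0⟩, -⟩ := hα
  have hmaps : MapsTo α (Ici 0) (Ici 0) := fun x hx => h0 ▸ hm.monotoneOn self_mem_Ici hx hx
  have hle : ∀ x ∈ Ici (0 : ℝ), α x ≤ x := by
    rintro x (hx : 0 ≤ x)
    rcases hx.eq_or_lt with rfl | hx
    exacts [h0.le, (hαlt x hx).le]
  have hlim : ∀ s ≥ (0 : ℝ), Tendsto (fun k : ℕ => α^[k] s) atTop (𝓝 0) := fun s hs =>
    tendsto_iterate_nhds_zero hc hmaps hle (fun x hx => (hαlt x hx).ne) hs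
  -- clamping at `0` makes each interpolated function continuous on all of `ℝ`
  let f : ℕ → ℝ → ℝ := fun k s => α^[k] (max s 0)
  refine ⟨hlim, linInterp f, classKL_linInterp ?_ ?_ ?_ ?_ ?_, fun s hs k => ?_⟩
  · exact fun k => (hc.iterate hmaps k).comp_continuous (continuous_id.max continuous_const)
      fun s => le_max_right s 0
  · intro k s hs t ht hst
    simpa only [f, max_eq_left (mem_Ici.1 hs), max_eq_left (mem_Ici.1 ht)] using
      hm.iterate hmaps k hs ht hst
  · exact fun k => by simp [f, iterate_fixed h0]
  · exact fun s hs => by simpa [f, max_eq_left hs] using antitone_iterate_apply hmaps hle hs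
  · exact fun s hs => by simpa [f, max_eq_left hs] using hlim s hs
  · simp [linInterp_natCast, f, max_eq_left hs]
end
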